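/- Let α ∈ ℝ be irrational and let φ_t(x, y, z) = (x + t, y + αt, z) be the flow on X = (AddCircle (1:ℝ))³ which is a linear flow with slope α in the first two coordinates and fixes the third coordinate. Then φ has no attractor: there do not exist a proper subset A ⊊ X and a nonempty open set U ⊆ X with closure(φ_t(U)) ⊆ U for every t > 0 and A = ⋂_{t ≥ 0} closure(φ_t(U)). -/

import Mathlib

/-!
The third coordinate `z` is invariant under the flow. If `U` is an attractor block, its image
under `z` is open, and it is also closed: it equals the image of the compact set `closure U`,
because `φ₁` maps `closure U` into `U` without changing `z`. Hence every fibre `T² × {z}` meets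
`U`. Since the slope is irrational, the forward half-orbit `{φₛ p | s ≥ t}` of any `p ∈ U` is
dense in its fibre, and it lies in `φₜ '' U`. So each `closure (φₜ '' U)` is the whole space,
and so is their intersection.
-/

/-- The flow on `(ℝ/ℤ)³` which is the linear flow with slope `α` in the first two
coordinates and fixes the third coordinate. -/
noncomputable def linearFlowT2xS1 (α : ℝ) (t : ℝ)
    (q : AddCircle (1 : ℝ) × AddCircle (1 : ℝ) × AddCircle (1 : ℝ)) :
    AddCircle (1 : ℝ) × AddCircle (1 : ℝ) × AddCircle (1 : ℝ) :=
  (q.1 + (t : AddCircle (1 : ℝ)), q.2.1 + ((α * t : ℝ) : AddCircle (1 : ℝ)), q.2.2)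

open Set

local notation "𝕋" => AddCircle (1 : ℝ)

theorem Flow.apply_mem_image_of_closure_image_subset {X : Type*} [TopologicalSpace X]
    (ϕ : Flow ℝ X) {U : Set X} (hU : ∀ t > 0, closure (ϕ t '' U) ⊆ U) {p : X} (hp : p ∈ U)
    {t s : ℝ} (hts : t ≤ s) : ϕ s p ∈ ϕ t '' U := by
  refine ⟨ϕ (s - t) p, ?_, by rw [← Flow.map_add, add_sub_cancel]⟩
  rcases hts.eq_or_lt with rfl | hlt
  · simpa using hp
  · exact hU _ (sub_pos.2 hlt) (subset_closure (mem_image_of_mem _ hp))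

theorem image_eq_univ_of_closure_image_subset {X Y : Type*} [TopologicalSpace X]
    [CompactSpace X] [TopologicalSpace Y] [T2Space Y] [PreconnectedSpace Y] {f : X → Y}
    (hf : Continuous f) (hfo : IsOpenMap f) {g : X → X} (hg : Continuous g)
    (hfg : ∀ x, f (g x) = f x) {U : Set X} (hU : U.Nonempty) (hUo : IsOpen U)
    (hgU : closure (g '' U) ⊆ U) : f '' U = univ := by
  have hclosure : f '' closure U = f '' U := by
    refine (image_mono subset_closure).antisymm' ?_
    rintro _ ⟨x, hx, rfl⟩
    exact ⟨g x, hgU (image_closure_subset_closure_image hg ⟨x, hx, rfl⟩), hfg x⟩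
  have hclosed : IsClosed (f '' U) :=
    hclosure ▸ (isClosed_closure.isCompact.image hf).isClosed
  exact IsClopen.eq_univ ⟨hclosed, hfo U hUo⟩ (hU.image f)

theorem AddCircle.denseRange_nsmul_coe {a p : ℝ} [Fact (0 < p)] (h : Irrational (a / p)) :
    DenseRange (· • a : ℕ → AddCircle p) :=
  denseRange_zsmul_iff_nsmul.1 (denseRange_zsmul_coe_iff.2 h)

noncomputable def linearFlowT2xS1.toFlow (α : ℝ) : Flow ℝ (𝕋 × 𝕋 × 𝕋) where
  toFun := linearFlowT2xS1 α
  cont' := by unfold linearFlowT2xS1; fun_prop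
  map_add' t₁ t₂ q := by
    ext <;> simp only [linearFlowT2xS1, mul_add, AddCircle.coe_add] <;> abel
  map_zero' q := by simp [linearFlowT2xS1]

theorem linearFlowT2xS1_mem_closure_image_Ici {α : ℝ} (hα : Irrational α)
    (p : 𝕋 × 𝕋 × 𝕋) (t : ℝ) (x y : 𝕋) :
    (x, y, p.2.2) ∈ closure ((linearFlowT2xS1 α · p) '' Ici t) := by
  obtain ⟨s, hs, hsx⟩ : x - p.1 ∈ ((↑) : ℝ → 𝕋) '' Ico t (t + 1) := by
    rw [AddCircle.coe_image_Ico_eq]; trivial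
  -- At the times `s + n`, `n : ℕ`, the first coordinate is `x` and the second moves by `n • α`.
  set c : 𝕋 := p.2.1 + ↑(α * s)
  have hg : Continuous fun v : 𝕋 => (x, c + v, p.2.2) := by fun_prop
  have hdense := AddCircle.denseRange_nsmul_coe (a := α) (p := 1) (by rwa [div_one])
  convert map_mem_closure hg (hdense (y - c)) ?_ using 1
  · simp
  rintro _ ⟨n, rfl⟩
  refine ⟨s + n, hs.1.trans (le_add_of_nonneg_right n.cast_nonneg), ?_⟩
  have hn : ((n : ℝ) : 𝕋) = 0 := by
    rw [← nsmul_one, AddCircle.coe_nsmul, AddCircle.coe_period, nsmul_zero]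
  have hαn : ((α * n : ℝ) : 𝕋) = n • (α : 𝕋) := by
    rw [mul_comm, ← nsmul_eq_mul, AddCircle.coe_nsmul]
  simp only [linearFlowT2xS1, c, mul_add, AddCircle.coe_add, hn, hαn, hsx, add_zero,
    add_sub_cancel, add_assoc]

/-- for irrational `α`, the flow `φ_t(x, y, z) = (x + t, y + αt, z)` on
`(ℝ/ℤ)³` has no attractor: there is no proper subset `A` and nonempty open attractor
block `U` with `A = ⋂_{t ≥ 0} closure (φ_t '' U)`. -/
theorem linear_flow_T2xS1_no_attractor (α : ℝ) (hα : Irrational α) :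
    ¬ ∃ (A U : Set (AddCircle (1 : ℝ) × AddCircle (1 : ℝ) × AddCircle (1 : ℝ))),
        A ≠ Set.univ ∧ U.Nonempty ∧ IsOpen U ∧
        (∀ t > (0 : ℝ), closure (linearFlowT2xS1 α t '' U) ⊆ U) ∧
        A = ⋂ t ∈ Set.Ici (0 : ℝ), closure (linearFlowT2xS1 α t '' U) := by
  rintro ⟨A, U, hA, hU, hUo, hblock, rfl⟩
  have hfibres : (fun q : 𝕋 × 𝕋 × 𝕋 => q.2.2) '' U = univ :=
    image_eq_univ_of_closure_image_subset (by fun_prop) (isOpenMap_snd.comp isOpenMap_snd)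
      ((linearFlowT2xS1.toFlow α).continuous_toFun 1) (fun _ => rfl) hU hUo (hblock 1 one_pos)
  refine hA (eq_univ_of_forall fun ⟨x, y, z⟩ => mem_iInter₂.2 fun t _ => ?_)
  obtain ⟨p, hp, rfl⟩ : z ∈ (fun q : 𝕋 × 𝕋 × 𝕋 => q.2.2) '' U := hfibres ▸ mem_univ z
  refine closure_mono ?_ (linearFlowT2xS1_mem_closure_image_Ici hα p t x y)
  rintro _ ⟨s, hs, rfl⟩
  exact (linearFlowT2xS1.toFlow α).apply_mem_image_of_closure_image_subset hblock hp hs
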